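/- The multi-sample (importance-weighted) bound is tighter than the single-sample ELBO and monotone in K: for i.i.d. z_1,...,z_K ~ q, L_K := E[log (1/K) ∑_{k=1}^K p(x, z_k)/q(z_k)] satisfies L_1 ≤ L_K ≤ L_{K+1} ≤ log p(x). -/

import Mathlib

/-!
Two applications of Jensen's inequality for the concave logarithm. Against the tangent line of
`log` at `p(x) = ∫ w dq`, the bound `L_K` is at most `log p(x)`, since the sample mean of the
weights has expectation `p(x)`. For monotonicity, the mean of `K + 1` weights is the average of
its `K + 1` leave-one-out means of `K` weights; by finite Jensen its logarithm dominates the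
average of their logarithms, and by exchangeability each leave-one-out term has expectation `L_K`.
-/

open MeasureTheory Real Finset

theorem log_le_div_add_log_sub_one {t c : ℝ} (ht : 0 < t) (hc : 0 < c) :
    log t ≤ t / c + log c - 1 := by
  have h := log_le_sub_one_of_pos (div_pos ht hc)
  rw [log_div ht.ne' hc.ne'] at h
  linarith

theorem integral_log_le_log_integral {α : Type*} [MeasurableSpace α] {μ : Measure α}
    [IsProbabilityMeasure μ] {f : α → ℝ} (hf_pos : ∀ a, 0 < f a) (hf : Integrable f μ)
    (hf_log : Integrable (fun a => log (f a)) μ) :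
    ∫ a, log (f a) ∂μ ≤ log (∫ a, f a ∂μ) := by
  set c := ∫ a, f a ∂μ
  have hc : 0 < c := by
    refine (integral_pos_iff_support_of_nonneg (fun a => (hf_pos a).le) hf).2 ?_
    simp [Function.support_eq_univ fun a => (hf_pos a).ne']
  calc ∫ a, log (f a) ∂μ ≤ ∫ a, (f a / c + (log c - 1)) ∂μ :=
        integral_mono hf_log ((hf.div_const c).add (integrable_const _)) fun a => by
          linarith [log_le_div_add_log_sub_one (hf_pos a) hc]
    _ = log c := by
        rw [integral_add (hf.div_const c) (integrable_const _), integral_div, div_self hc.ne']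
        simp

theorem Fin.sum_sum_succAbove {M : Type*} [AddCommGroup M] {n : ℕ} (f : Fin (n + 1) → M) :
    ∑ j : Fin (n + 1), ∑ k : Fin n, f (j.succAbove k) = n • ∑ i, f i := by
  have h : ∀ j, ∑ k : Fin n, f (j.succAbove k) = ∑ i, f i - f j := fun j => by
    rw [Fin.sum_univ_succAbove f j, add_sub_cancel_left]
  simp only [h, sum_sub_distrib, sum_const, succ_nsmul, add_sub_cancel_right]

theorem one_div_mul_sum_pos {n : ℕ} (hn : 0 < n) {x : Fin n → ℝ} (hx : ∀ i, 0 < x i) :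
    0 < (1 / (n : ℝ)) * ∑ i, x i :=
  mul_pos (by positivity) (sum_pos (fun i _ => hx i) ⟨⟨0, hn⟩, mem_univ _⟩)

theorem sum_log_mean_succAbove_le {n : ℕ} (hn : 0 < n) {x : Fin (n + 1) → ℝ}
    (hx : ∀ i, 0 < x i) :
    ∑ j : Fin (n + 1), (1 / ((n + 1 : ℕ) : ℝ)) * log ((1 / (n : ℝ)) * ∑ k, x (j.succAbove k))
      ≤ log ((1 / ((n + 1 : ℕ) : ℝ)) * ∑ i, x i) := by
  have hweights : ∑ _j : Fin (n + 1), 1 / ((n + 1 : ℕ) : ℝ) = 1 := by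
    rw [sum_const, card_univ, Fintype.card_fin, nsmul_eq_mul, mul_one_div_cancel (by positivity)]
  have jensen := strictConcaveOn_log_Ioi.concaveOn.le_map_sum (t := univ)
    (fun _ _ => by positivity) hweights
    fun j _ => one_div_mul_sum_pos hn fun k => hx (j.succAbove k)
  calc _ ≤ log (∑ j : Fin (n + 1),
          (1 / ((n + 1 : ℕ) : ℝ)) * ((1 / (n : ℝ)) * ∑ k, x (j.succAbove k))) := by
        simpa only [smul_eq_mul] using jensen
    _ = _ := by
        rw [← mul_sum, ← mul_sum, Fin.sum_sum_succAbove, nsmul_eq_mul]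
        field_simp

theorem MeasureTheory.MeasurePreserving.integral_comp_of_aestronglyMeasurable {α β E : Type*}
    [MeasurableSpace α] [MeasurableSpace β] [NormedAddCommGroup E] [NormedSpace ℝ E]
    {μ : Measure α} {ν : Measure β} {f : α → β} (hf : MeasurePreserving f μ ν) {g : β → E}
    (hg : AEStronglyMeasurable g ν) :
    ∫ a, g (f a) ∂μ = ∫ b, g b ∂ν := by
  rw [← hf.map_eq] at hg ⊢
  exact (integral_map hf.measurable.aemeasurable hg).symm

theorem measurePreserving_comp_succAbove {n : ℕ} {α : Fin (n + 1) → Type*}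
    [∀ i, MeasurableSpace (α i)] (μ : ∀ i, Measure (α i)) [∀ i, IsProbabilityMeasure (μ i)]
    (j : Fin (n + 1)) :
    MeasurePreserving (fun x k => x (j.succAbove k)) (Measure.pi μ)
      (Measure.pi fun k => μ (j.succAbove k)) :=
  measurePreserving_snd.comp (measurePreserving_piFinSuccAbove μ j)

section IWAE

variable {Z : Type*} [MeasurableSpace Z] (q : Measure Z) [IsProbabilityMeasure q] {w : Z → ℝ}

noncomputable def logMeanWeight (w : Z → ℝ) (K : ℕ) (zs : Fin K → Z) : ℝ :=
  log ((1 / (K : ℝ)) * ∑ k, w (zs k))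

noncomputable def iwaeBound (w : Z → ℝ) (K : ℕ) : ℝ :=
  ∫ zs, logMeanWeight w K zs ∂Measure.pi fun _ : Fin K => q

theorem iwaeBound_le_log_integral {K : ℕ} (hK : 0 < K) (hw_pos : ∀ z, 0 < w z)
    (hw_int : Integrable w q) (hint : Integrable (logMeanWeight w K) (Measure.pi fun _ => q)) :
    iwaeBound q w K ≤ log (∫ z, w z ∂q) := by
  have hint_k : ∀ k : Fin K, Integrable (fun zs : Fin K → Z => w (zs k)) (Measure.pi fun _ => q) :=
    fun k => integrable_comp_eval hw_int
  have hintegral_k : ∀ k : Fin K, ∫ zs : Fin K → Z, w (zs k) ∂Measure.pi (fun _ => q)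
      = ∫ z, w z ∂q :=
    fun k => integral_comp_eval (μ := fun _ => q) hw_int.aestronglyMeasurable
  have hmean_int : ∫ zs : Fin K → Z, (1 / (K : ℝ)) * ∑ k, w (zs k) ∂Measure.pi (fun _ => q)
      = ∫ z, w z ∂q := by
    rw [integral_const_mul, integral_finsetSum _ fun k _ => hint_k k]
    simp only [hintegral_k, sum_const, card_univ, Fintype.card_fin, nsmul_eq_mul]
    field_simp
  rw [iwaeBound, ← hmean_int]
  exact integral_log_le_log_integral (fun zs => one_div_mul_sum_pos hK fun k => hw_pos (zs k))
    ((integrable_finsetSum _ fun k _ => hint_k k).const_mul _) hint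

theorem iwaeBound_le_iwaeBound_succ {K : ℕ} (hK : 0 < K) (hw_pos : ∀ z, 0 < w z)
    (hint : Integrable (logMeanWeight w K) (Measure.pi fun _ => q))
    (hint_succ : Integrable (logMeanWeight w (K + 1)) (Measure.pi fun _ => q)) :
    iwaeBound q w K ≤ iwaeBound q w (K + 1) := by
  set μ := Measure.pi fun _ : Fin (K + 1) => q
  have hT := measurePreserving_comp_succAbove (fun _ : Fin (K + 1) => q)
  have hint_j : ∀ j : Fin (K + 1),
      Integrable (fun zs : Fin (K + 1) → Z => logMeanWeight w K fun k => zs (j.succAbove k)) μ :=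
    fun j => (hT j).integrable_comp_of_integrable hint
  have hexch : ∀ j : Fin (K + 1),
      ∫ zs, logMeanWeight w K (fun k => zs (j.succAbove k)) ∂μ = iwaeBound q w K :=
    fun j => (hT j).integral_comp_of_aestronglyMeasurable hint.aestronglyMeasurable
  calc iwaeBound q w K
      = ∑ j : Fin (K + 1), (1 / ((K + 1 : ℕ) : ℝ)) *
          ∫ zs, logMeanWeight w K (fun k => zs (j.succAbove k)) ∂μ := by
        simp only [hexch, ← mul_sum, sum_const, card_univ, Fintype.card_fin, nsmul_eq_mul]
        field_simp
    _ = ∫ zs, ∑ j : Fin (K + 1), (1 / ((K + 1 : ℕ) : ℝ)) *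
          logMeanWeight w K (fun k => zs (j.succAbove k)) ∂μ := by
        rw [integral_finsetSum _ fun j _ => (hint_j j).const_mul _]
        simp only [integral_const_mul]
    _ ≤ iwaeBound q w (K + 1) :=
        integral_mono (integrable_finsetSum _ fun j _ => (hint_j j).const_mul _) hint_succ
          fun zs => sum_log_mean_succAbove_le (x := fun i => w (zs i)) hK fun i => hw_pos (zs i)

end IWAE

theorem iwae_bound_monotone_general
    {Z : Type*} [MeasurableSpace Z]
    (q : Measure Z) [IsProbabilityMeasure q]
    -- importance weights w(z) = p(x, z) / q(z)
    (w : Z → ℝ) (hw_pos : ∀ z, 0 < w z)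
    (hw_int : Integrable w q)
    -- the marginal likelihood p(x) = ∫ w dq
    (px : ℝ) (hpx : px = ∫ z, w z ∂q)
    -- the multi-sample bounds over i.i.d. samples z_1, ..., z_K ~ q
    (L : ℕ → ℝ)
    (hL : ∀ K, L K = ∫ zs : Fin K → Z,
      Real.log ((1 / (K : ℝ)) * ∑ k, w (zs k)) ∂(Measure.pi fun _ : Fin K => q))
    (hL_int : ∀ K, Integrable
      (fun zs : Fin K → Z => Real.log ((1 / (K : ℝ)) * ∑ k, w (zs k)))
      (Measure.pi fun _ : Fin K => q)) :
    ∀ K : ℕ, 0 < K → L 1 ≤ L K ∧ L K ≤ L (K + 1) ∧ L K ≤ Real.log px := by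
  obtain rfl : L = iwaeBound q w := funext hL
  subst hpx
  have hmono : ∀ K ≥ 1, iwaeBound q w K ≤ iwaeBound q w (K + 1) := fun K hK =>
    iwaeBound_le_iwaeBound_succ q hK hw_pos (hL_int K) (hL_int (K + 1))
  intro K hK
  exact ⟨monotoneOn_nat_Ici_of_le_succ hmono (Nat.le_refl 1) hK hK, hmono K hK,
    iwaeBound_le_log_integral q hK hw_pos hw_int (hL_int K)⟩

/-- The multi-sample (importance-weighted) bound L_K of Burda et al. is tighter
than the single-sample ELBO, monotone in K, and never exceeds log p(x):
L_1 ≤ L_K ≤ L_{K+1} ≤ log p(x). -/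
theorem iwae_bound_monotone
    {Z : Type*} [MeasurableSpace Z]
    (q : Measure Z) [IsProbabilityMeasure q]
    -- importance weights w(z) = p(x, z) / q(z)
    (w : Z → ℝ) (hw_pos : ∀ z, 0 < w z) (hw_meas : Measurable w)
    (hw_int : Integrable w q)
    -- the marginal likelihood p(x) = ∫ w dq
    (px : ℝ) (hpx : px = ∫ z, w z ∂q)
    -- the multi-sample bounds over i.i.d. samples z_1, ..., z_K ~ q
    (L : ℕ → ℝ)
    (hL : ∀ K, L K = ∫ zs : Fin K → Z,
      Real.log ((1 / (K : ℝ)) * ∑ k, w (zs k)) ∂(Measure.pi fun _ : Fin K => q))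
    (hL_int : ∀ K, Integrable
      (fun zs : Fin K → Z => Real.log ((1 / (K : ℝ)) * ∑ k, w (zs k)))
      (Measure.pi fun _ : Fin K => q)) :
    ∀ K : ℕ, 0 < K → L 1 ≤ L K ∧ L K ≤ L (K + 1) ∧ L K ≤ Real.log px :=
  iwae_bound_monotone_general q w hw_pos hw_int px hpx L hL hL_int
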